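/- arXiv:2605.14538 — 12 statements merged into one kernel-verified Lean document; each statement's English description precedes it below -/
import Mathlib

section
/- Each PBR vector is orthogonal to one of the four product preparations: ⟨ξ₁, |0⟩⊗|0⟩⟩ = 0, ⟨ξ₂, |0⟩⊗|+⟩⟩ = 0, ⟨ξ₃, |+⟩⊗|0⟩⟩ = 0, and ⟨ξ₄, |+⟩⊗|+⟩⟩ = 0. -/
open ComplexConjugate Finset

noncomputable section

/-- The single-qubit computational basis vector `|0⟩`. -/
def ket0 : Fin 2 → ℂ := ![1, 0]

/-- The single-qubit computational basis vector `|1⟩`. -/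
def ket1 : Fin 2 → ℂ := ![0, 1]

/-- The X-basis vector `|+⟩ = (|0⟩ + |1⟩)/√2`. -/
def ketP : Fin 2 → ℂ := fun i => (ket0 i + ket1 i) / (Real.sqrt 2 : ℂ)

/-- The X-basis vector `|−⟩ = (|0⟩ − |1⟩)/√2`. -/
def ketM : Fin 2 → ℂ := fun i => (ket0 i - ket1 i) / (Real.sqrt 2 : ℂ)

/-- Tensor product of two single-qubit vectors. -/
def tens (u v : Fin 2 → ℂ) : Fin 2 × Fin 2 → ℂ := fun p => u p.1 * v p.2

/-- The inner product on the two-qubit space `H₂`, antilinear in the first slot. -/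
def inner2 (u v : Fin 2 × Fin 2 → ℂ) : ℂ := ∑ p : Fin 2 × Fin 2, conj (u p) * v p

/-- The four PBR vectors `ξ₁, ξ₂, ξ₃, ξ₄`. -/
def ξ : Fin 4 → (Fin 2 × Fin 2 → ℂ) :=
  ![fun p => (tens ket0 ket1 p + tens ket1 ket0 p) / (Real.sqrt 2 : ℂ),
    fun p => (tens ket0 ketM p + tens ket1 ketP p) / (Real.sqrt 2 : ℂ),
    fun p => (tens ketP ket1 p + tens ketM ket0 p) / (Real.sqrt 2 : ℂ),
    fun p => (tens ketP ketM p + tens ketM ketP p) / (Real.sqrt 2 : ℂ)]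

set_option maxHeartbeats 2000000 in
/-- Each PBR vector is orthogonal to one of the four product preparations:
`⟨ξ₁, |0⟩⊗|0⟩⟩ = 0`, `⟨ξ₂, |0⟩⊗|+⟩⟩ = 0`, `⟨ξ₃, |+⟩⊗|0⟩⟩ = 0`, `⟨ξ₄, |+⟩⊗|+⟩⟩ = 0`. -/
theorem pbr_vectors_orthogonal_to_preparations :
    inner2 (ξ 0) (tens ket0 ket0) = 0 ∧
    inner2 (ξ 1) (tens ket0 ketP) = 0 ∧
    inner2 (ξ 2) (tens ketP ket0) = 0 ∧
    inner2 (ξ 3) (tens ketP ketP) = 0 := by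
  have h2 : (Real.sqrt 2 : ℂ) ≠ 0 := by
    simp [Complex.ofReal_ne_zero, Real.sqrt_eq_zero']
  refine ⟨?_, ?_, ?_, ?_⟩ <;>
  · simp only [inner2, ξ, tens, ket0, ket1, ketP, ketM, Fintype.sum_prod_type,
      Fin.sum_univ_succ, Fin.sum_univ_zero, Matrix.cons_val_zero, Matrix.cons_val_one,
      Matrix.head_cons, map_div₀, map_add, map_sub, map_one, map_mul, Complex.conj_ofReal,
      map_zero, Matrix.cons_val_succ, Matrix.cons_val_two, Matrix.cons_val_three,
      Matrix.tail_cons]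
    field_simp
    try ring

end
end

section
/- (Finite PBR overlap theorem.) Let Λ be a finite type, let μ₀, μ₊ : Λ → ℝ be nonnegative with Σ_λ μ₀(λ) = 1 and Σ_λ μ₊(λ) = 1, and let f₁, f₂, f₃, f₄ : Λ × Λ → ℝ be nonnegative functions with f₁(λ₁,λ₂) + f₂(λ₁,λ₂) + f₃(λ₁,λ₂) + f₄(λ₁,λ₂) = 1 for all (λ₁,λ₂). Suppose Σ_{λ₁,λ₂} μ₀(λ₁)·μ₀(λ₂)·f₁(λ₁,λ₂) = 0, Σ_{λ₁,λ₂} μ₀(λ₁)·μ₊(λ₂)·f₂(λ₁,λ₂) = 0, Σ_{λ₁,λ₂} μ₊(λ₁)·μ₀(λ₂)·f₃(λ₁,λ₂) = 0, and Σ_{λ₁,λ₂} μ₊(λ₁)·μ₊(λ₂)·f₄(λ₁,λ₂) = 0. Then μ₀(λ)·μ₊(λ) = 0 for every λ ∈ Λ, i.e. the two distributions have disjoint supports. -/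
open Finset

/-- **Finite PBR overlap theorem.** If a finite ontological model with preparation
independence reproduces the four zero-probability predictions of the PBR measurement,
then the two epistemic states `μ₀` and `μ₊` have disjoint supports. -/
theorem pbr_overlap_finite {Λ : Type*} [Fintype Λ]
    (μ0 μp : Λ → ℝ)
    (hμ0 : ∀ l, 0 ≤ μ0 l) (hμp : ∀ l, 0 ≤ μp l)
    (hμ0sum : ∑ l : Λ, μ0 l = 1) (hμpsum : ∑ l : Λ, μp l = 1)
    (f1 f2 f3 f4 : Λ × Λ → ℝ)
    (hf1 : ∀ x, 0 ≤ f1 x) (hf2 : ∀ x, 0 ≤ f2 x)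
    (hf3 : ∀ x, 0 ≤ f3 x) (hf4 : ∀ x, 0 ≤ f4 x)
    (hfsum : ∀ x : Λ × Λ, f1 x + f2 x + f3 x + f4 x = 1)
    (h1 : ∑ l1 : Λ, ∑ l2 : Λ, μ0 l1 * μ0 l2 * f1 (l1, l2) = 0)
    (h2 : ∑ l1 : Λ, ∑ l2 : Λ, μ0 l1 * μp l2 * f2 (l1, l2) = 0)
    (h3 : ∑ l1 : Λ, ∑ l2 : Λ, μp l1 * μ0 l2 * f3 (l1, l2) = 0)
    (h4 : ∑ l1 : Λ, ∑ l2 : Λ, μp l1 * μp l2 * f4 (l1, l2) = 0) :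
    ∀ l : Λ, μ0 l * μp l = 0 := by
  intro l
  by_contra hne
  have h0pos : 0 < μ0 l := by
    rcases lt_or_eq_of_le (hμ0 l) with h | h
    · exact h
    · exact absurd (by rw [← h]; ring) hne
  have hppos : 0 < μp l := by
    rcases lt_or_eq_of_le (hμp l) with h | h
    · exact h
    · exact absurd (by rw [← h]; ring) hne
  have key : ∀ (a b : Λ → ℝ) (f : Λ × Λ → ℝ), (∀ x, 0 ≤ a x) → (∀ x, 0 ≤ b x) →
      (∀ x, 0 ≤ f x) → (∑ l1 : Λ, ∑ l2 : Λ, a l1 * b l2 * f (l1, l2) = 0) →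
      a l * b l * f (l, l) = 0 := by
    intro a b f ha hb hf hsum
    have hnn : ∀ l1 ∈ Finset.univ, (0:ℝ) ≤ ∑ l2 : Λ, a l1 * b l2 * f (l1, l2) := by
      intro l1 _
      exact Finset.sum_nonneg fun l2 _ =>
        mul_nonneg (mul_nonneg (ha l1) (hb l2)) (hf _)
    have h1 := (Finset.sum_eq_zero_iff_of_nonneg hnn).mp hsum l (Finset.mem_univ l)
    have hnn2 : ∀ l2 ∈ Finset.univ, (0:ℝ) ≤ a l * b l2 * f (l, l2) := fun l2 _ =>
      mul_nonneg (mul_nonneg (ha l) (hb l2)) (hf _)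
    exact (Finset.sum_eq_zero_iff_of_nonneg hnn2).mp h1 l (Finset.mem_univ l)
  have k1 := key μ0 μ0 f1 hμ0 hμ0 hf1 h1
  have k2 := key μ0 μp f2 hμ0 hμp hf2 h2
  have k3 := key μp μ0 f3 hμp hμ0 hf3 h3
  have k4 := key μp μp f4 hμp hμp hf4 h4
  have e1 : f1 (l, l) = 0 := by
    have := mul_pos h0pos h0pos
    exact (mul_eq_zero.mp k1).resolve_left (ne_of_gt this)
  have e2 : f2 (l, l) = 0 := by
    have := mul_pos h0pos hppos
    exact (mul_eq_zero.mp k2).resolve_left (ne_of_gt this)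
  have e3 : f3 (l, l) = 0 := by
    have := mul_pos hppos h0pos
    exact (mul_eq_zero.mp k3).resolve_left (ne_of_gt this)
  have e4 : f4 (l, l) = 0 := by
    have := mul_pos hppos hppos
    exact (mul_eq_zero.mp k4).resolve_left (ne_of_gt this)
  have := hfsum (l, l)
  rw [e1, e2, e3, e4] at this
  norm_num at this
end

section
/- (Measure-theoretic PBR overlap theorem.) Let (Λ, 𝒜) be a measurable space, let μ₀ and μ₊ be probability measures on Λ, and let f₁, f₂, f₃, f₄ : Λ × Λ → ℝ be measurable nonnegative functions with f₁(x) + f₂(x) + f₃(x) + f₄(x) = 1 for all x ∈ Λ × Λ. Suppose ∫ f₁ d(μ₀ × μ₀) = 0, ∫ f₂ d(μ₀ × μ₊) = 0, ∫ f₃ d(μ₊ × μ₀) = 0, and ∫ f₄ d(μ₊ × μ₊) = 0, where μ × ν denotes the product measure. Then μ₀ and μ₊ are mutually singular. -/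
open MeasureTheory

/-- **Measure-theoretic PBR overlap theorem.** If an ontological model with preparation
independence (product measures) reproduces the four zero-probability predictions of the
PBR measurement, then the probability measures `μ₀` and `μ₊` are mutually singular. -/
theorem pbr_overlap_measure {Λ : Type*} [MeasurableSpace Λ]
    (μ0 μp : Measure Λ) [IsProbabilityMeasure μ0] [IsProbabilityMeasure μp]
    (f1 f2 f3 f4 : Λ × Λ → ℝ)
    (hm1 : Measurable f1) (hm2 : Measurable f2) (hm3 : Measurable f3) (hm4 : Measurable f4)
    (hf1 : ∀ x, 0 ≤ f1 x) (hf2 : ∀ x, 0 ≤ f2 x)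
    (hf3 : ∀ x, 0 ≤ f3 x) (hf4 : ∀ x, 0 ≤ f4 x)
    (hfsum : ∀ x : Λ × Λ, f1 x + f2 x + f3 x + f4 x = 1)
    (h1 : ∫ x, f1 x ∂(μ0.prod μ0) = 0)
    (h2 : ∫ x, f2 x ∂(μ0.prod μp) = 0)
    (h3 : ∫ x, f3 x ∂(μp.prod μ0) = 0)
    (h4 : ∫ x, f4 x ∂(μp.prod μp) = 0) :
    μ0 ⟂ₘ μp := by
  -- absolutely continuous part of μ0 with respect to μp
  set ν : Measure Λ := μp.withDensity (μ0.rnDeriv μp) with hν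
  have hνle : ν ≤ μ0 := Measure.withDensity_rnDeriv_le μ0 μp
  have hν0 : ν ≪ μ0 := Measure.absolutelyContinuous_of_le hνle
  have hνp : ν ≪ μp := MeasureTheory.withDensity_absolutelyContinuous _ _
  have : IsFiniteMeasure ν := MeasureTheory.isFiniteMeasure_of_le μ0 hνle
  -- boundedness: each fᵢ ≤ 1
  have hb : ∀ (f : Λ × Λ → ℝ), (∀ x, 0 ≤ f x) →
      (∀ x, f1 x + f2 x + f3 x + f4 x = 1) → (f = f1 ∨ f = f2 ∨ f = f3 ∨ f = f4) →
      ∀ x, ‖f x‖ ≤ 1 := by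
    intro f hf hs hcase x
    rw [Real.norm_eq_abs, abs_of_nonneg (hf x)]
    have := hfsum x
    rcases hcase with rfl | rfl | rfl | rfl <;> nlinarith [hf1 x, hf2 x, hf3 x, hf4 x]
  have hint : ∀ (f : Λ × Λ → ℝ), Measurable f → (∀ x, ‖f x‖ ≤ 1) →
      ∀ (μ ν' : Measure Λ), IsProbabilityMeasure μ → IsProbabilityMeasure ν' →
      Integrable f (μ.prod ν') := by
    intro f hmf hbf μ ν' hμ hν'
    exact (integrable_const (1 : ℝ)).mono' hmf.aestronglyMeasurable
      (Filter.Eventually.of_forall hbf)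
  have key : ∀ (f : Λ × Λ → ℝ), Measurable f → (∀ x, 0 ≤ f x) →
      (f = f1 ∨ f = f2 ∨ f = f3 ∨ f = f4) →
      ∀ (μ ν' : Measure Λ), IsProbabilityMeasure μ → IsProbabilityMeasure ν' →
      (∫ x, f x ∂(μ.prod ν')) = 0 → f =ᵐ[μ.prod ν'] 0 := by
    intro f hmf hposf hcase μ ν' hμ hν' hzero
    have hi := hint f hmf (hb f hposf hfsum hcase) μ ν' hμ hν'
    exact (integral_eq_zero_iff_of_nonneg hposf hi).mp hzero
  have e1 : f1 =ᵐ[μ0.prod μ0] 0 := key f1 hm1 hf1 (Or.inl rfl) _ _ ‹_› ‹_› h1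
  have e2 : f2 =ᵐ[μ0.prod μp] 0 := key f2 hm2 hf2 (Or.inr (Or.inl rfl)) _ _ ‹_› ‹_› h2
  have e3 : f3 =ᵐ[μp.prod μ0] 0 := key f3 hm3 hf3 (Or.inr (Or.inr (Or.inl rfl))) _ _ ‹_› ‹_› h3
  have e4 : f4 =ᵐ[μp.prod μp] 0 := key f4 hm4 hf4 (Or.inr (Or.inr (Or.inr rfl))) _ _ ‹_› ‹_› h4
  -- transfer to ν.prod ν
  have hac1 : ν.prod ν ≪ μ0.prod μ0 := hν0.prod hν0
  have hac2 : ν.prod ν ≪ μ0.prod μp := hν0.prod hνp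
  have hac3 : ν.prod ν ≪ μp.prod μ0 := hνp.prod hν0
  have hac4 : ν.prod ν ≪ μp.prod μp := hνp.prod hνp
  have g1 : f1 =ᵐ[ν.prod ν] 0 := hac1.ae_eq e1
  have g2 : f2 =ᵐ[ν.prod ν] 0 := hac2.ae_eq e2
  have g3 : f3 =ᵐ[ν.prod ν] 0 := hac3.ae_eq e3
  have g4 : f4 =ᵐ[ν.prod ν] 0 := hac4.ae_eq e4
  -- ν must be zero
  have hνzero : ν = 0 := by
    by_contra hne
    have hne' : ν.prod ν ≠ 0 := by
      intro h
      apply hne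
      have := congrArg (fun m : Measure (Λ × Λ) => m Set.univ) h
      simp only [Measure.coe_zero, Pi.zero_apply] at this
      rw [← Set.univ_prod_univ, Measure.prod_prod] at this
      rcases mul_eq_zero.mp this with h' | h' <;>
        exact Measure.measure_univ_eq_zero.mp h'
    have : (ae (ν.prod ν)).NeBot := ae_neBot.mpr hne'
    obtain ⟨x, ⟨hx1, hx2⟩, hx3, hx4⟩ := ((g1.and g2).and (g3.and g4)).exists
    have hs := hfsum x
    simp only [Pi.zero_apply] at hx1 hx2 hx3 hx4
    rw [hx1, hx2, hx3, hx4] at hs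
    norm_num at hs
  -- conclude
  have hdecomp := (μ0.haveLebesgueDecomposition_add μp)
  rw [← hν, hνzero, add_zero] at hdecomp
  rw [hdecomp]
  exact Measure.mutuallySingular_singularPart μ0 μp
end

section
/- (PBR theorem for the pair {|0⟩, |+⟩}.) Let Λ be a finite type, let μ₀, μ₊ : Λ → ℝ be nonnegative with Σ_λ μ₀(λ) = 1 and Σ_λ μ₊(λ) = 1, and let f₁, f₂, f₃, f₄ : Λ × Λ → ℝ be nonnegative with Σᵢ fᵢ(λ₁,λ₂) = 1 for all (λ₁,λ₂). Write μ_s for μ₀ if s = 0 and μ₊ if s = +, and |s⟩ for |0⟩ or |+⟩ accordingly. Suppose the model reproduces the quantum predictions of the PBR measurement on all four product preparations: for every s, t ∈ {0, +} and every i ∈ {1,2,3,4}, Σ_{λ₁,λ₂} μ_s(λ₁)·μ_t(λ₂)·fᵢ(λ₁,λ₂) = |⟨ξᵢ, |s⟩⊗|t⟩⟩|². Then μ₀(λ)·μ₊(λ) = 0 for every λ ∈ Λ. -/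
open ComplexConjugate Finset

noncomputable section

lemma pbr_sq2 : ((Real.sqrt 2 : ℝ) : ℂ) ≠ 0 := by
  norm_num [Complex.ofReal_ne_zero, Real.sqrt_eq_zero']

lemma pbr_inn1 : inner2 (ξ 0) (tens ket0 ket0) = 0 := by
  simp [inner2, ξ, tens, ket0, ket1, ketP, ketM, Fintype.sum_prod_type, Fin.sum_univ_succ]
lemma pbr_inn2 : inner2 (ξ 1) (tens ket0 ketP) = 0 := by
  have h := pbr_sq2
  simp [inner2, ξ, tens, ket0, ket1, ketP, ketM, Fintype.sum_prod_type, Fin.sum_univ_succ, map_div₀]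
  field_simp
  ring
lemma pbr_inn3 : inner2 (ξ 2) (tens ketP ket0) = 0 := by
  have h := pbr_sq2
  simp [inner2, ξ, tens, ket0, ket1, ketP, ketM, Fintype.sum_prod_type, Fin.sum_univ_succ, map_div₀]
  field_simp
  ring
lemma pbr_inn4 : inner2 (ξ 3) (tens ketP ketP) = 0 := by
  have h := pbr_sq2
  simp [inner2, ξ, tens, ket0, ket1, ketP, ketM, Fintype.sum_prod_type, Fin.sum_univ_succ, map_div₀]
  field_simp
  ring

/-- **PBR theorem for the pair `{|0⟩, |+⟩}`.** If a finite ontological model with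
preparation independence reproduces the Born probabilities of the PBR measurement on
all four product preparations of `|0⟩` and `|+⟩`, then the epistemic states `μ₀` and
`μ₊` have disjoint supports. -/
theorem pbr_theorem_zero_plus {Λ : Type*} [Fintype Λ]
    (μ0 μp : Λ → ℝ)
    (hμ0 : ∀ l, 0 ≤ μ0 l) (hμp : ∀ l, 0 ≤ μp l)
    (hμ0sum : ∑ l : Λ, μ0 l = 1) (hμpsum : ∑ l : Λ, μp l = 1)
    (f : Fin 4 → Λ × Λ → ℝ)
    (hf : ∀ i x, 0 ≤ f i x)
    (hfsum : ∀ x : Λ × Λ, ∑ i : Fin 4, f i x = 1)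
    (hrep : ∀ s t : Fin 2, ∀ i : Fin 4,
      ∑ l1 : Λ, ∑ l2 : Λ, ![μ0, μp] s l1 * ![μ0, μp] t l2 * f i (l1, l2)
        = ‖inner2 (ξ i) (tens (![ket0, ketP] s) (![ket0, ketP] t))‖ ^ 2) :
    ∀ l : Λ, μ0 l * μp l = 0 := by
  have key : ∀ s t : Fin 2, ∀ i : Fin 4,
      inner2 (ξ i) (tens (![ket0, ketP] s) (![ket0, ketP] t)) = 0 →
      ∀ l : Λ, ![μ0, μp] s l * ![μ0, μp] t l * f i (l, l) = 0 := by
    intro s t i hz l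
    have h := hrep s t i
    rw [hz] at h
    simp only [map_zero, norm_zero, ne_eq, OfNat.ofNat_ne_zero, not_false_eq_true, zero_pow] at h
    have hnn : ∀ l1 ∈ (univ : Finset Λ), 0 ≤ ∑ l2 : Λ, ![μ0, μp] s l1 * ![μ0, μp] t l2 * f i (l1, l2) := by
      intro l1 _
      apply Finset.sum_nonneg
      intro l2 _
      have h1 : 0 ≤ ![μ0, μp] s l1 := by fin_cases s <;> simp [hμ0, hμp]
      have h2 : 0 ≤ ![μ0, μp] t l2 := by fin_cases t <;> simp [hμ0, hμp]
      exact mul_nonneg (mul_nonneg h1 h2) (hf i _)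
    have h1 := (Finset.sum_eq_zero_iff_of_nonneg hnn).mp h l (mem_univ l)
    have hnn2 : ∀ l2 ∈ (univ : Finset Λ), 0 ≤ ![μ0, μp] s l * ![μ0, μp] t l2 * f i (l, l2) := by
      intro l2 _
      have ha : 0 ≤ ![μ0, μp] s l := by fin_cases s <;> simp [hμ0, hμp]
      have hb : 0 ≤ ![μ0, μp] t l2 := by fin_cases t <;> simp [hμ0, hμp]
      exact mul_nonneg (mul_nonneg ha hb) (hf i _)
    exact (Finset.sum_eq_zero_iff_of_nonneg hnn2).mp h1 l (mem_univ l)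
  intro l
  by_contra hne
  have h0 : 0 < μ0 l := lt_of_le_of_ne (hμ0 l) (by intro h; exact hne (by rw [← h]; ring))
  have hp : 0 < μp l := lt_of_le_of_ne (hμp l) (by intro h; exact hne (by rw [← h]; ring))
  have k1 := key 0 0 0 pbr_inn1 l
  have k2 := key 0 1 1 pbr_inn2 l
  have k3 := key 1 0 2 pbr_inn3 l
  have k4 := key 1 1 3 pbr_inn4 l
  simp only [Matrix.cons_val_zero, Matrix.cons_val_one, Matrix.head_cons] at k1 k2 k3 k4
  have f1 : f 0 (l, l) = 0 := by
    rcases mul_eq_zero.mp k1 with h | h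
    · exact absurd h (mul_pos h0 h0).ne'
    · exact h
  have f2 : f 1 (l, l) = 0 := by
    rcases mul_eq_zero.mp k2 with h | h
    · exact absurd h (mul_pos h0 hp).ne'
    · exact h
  have f3 : f 2 (l, l) = 0 := by
    rcases mul_eq_zero.mp k3 with h | h
    · exact absurd h (mul_pos hp h0).ne'
    · exact h
  have f4 : f 3 (l, l) = 0 := by
    rcases mul_eq_zero.mp k4 with h | h
    · exact absurd h (mul_pos hp hp).ne'
    · exact h
  have := hfsum (l, l)
  rw [Fin.sum_univ_four, f1, f2, f3, f4] at this
  norm_num at this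


end
end

section
/- (Combinatorial core of the Local Friendliness no-go theorem for free choices.) There is no function p : Fin 2 × Fin 2 × Fin 2 × Fin 2 × Fin 4 → ℝ, written p(a, b, c, d, w) where a, b are Alice's and Bob's choices, c, d are Charlie's and Debbie's X-basis outcomes (value 0 meaning '+'), and w is Wigner's PBR outcome, such that p is nonnegative, Σ_{a,b,c,d,w} p(a,b,c,d,w) = 1, and the following hold: (i) Σ_{c,d} p(0,0,c,d,ξ₁) = 0; (ii) Σ_{b,c} p(0,b,c,+,ξ₂) = 0; (iii) Σ_{a,d} p(a,0,+,d,ξ₃) = 0; (iv) Σ_{a,b} p(a,b,+,+,ξ₄) = 0; (v) Σ_w p(0,0,+,+,w) > 0. -/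
open Finset

/-- **Combinatorial core of the Local Friendliness no-go theorem for free choices.**
There is no joint probability distribution `p (a, b, c, d, w)` over Alice's choice `a`,
Bob's choice `b`, Charlie's and Debbie's X-basis outcomes `c, d` (with `0` encoding `+`),
and Wigner's PBR outcome `w ∈ Fin 4` (encoding `ξ₁, ξ₂, ξ₃, ξ₄`), that is nonnegative,
normalized, assigns probability zero to the four forbidden events, and assigns strictly
positive probability to the event `a = 0, b = 0, c = +, d = +`. -/
theorem lf_free_choice_combinatorial_no_go :
    ¬ ∃ p : Fin 2 × Fin 2 × Fin 2 × Fin 2 × Fin 4 → ℝ,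
      (∀ x, 0 ≤ p x) ∧
      (∑ x : Fin 2 × Fin 2 × Fin 2 × Fin 2 × Fin 4, p x = 1) ∧
      (∑ c : Fin 2, ∑ d : Fin 2, p (0, 0, c, d, 0) = 0) ∧
      (∑ b : Fin 2, ∑ c : Fin 2, p (0, b, c, 0, 1) = 0) ∧
      (∑ a : Fin 2, ∑ d : Fin 2, p (a, 0, 0, d, 2) = 0) ∧
      (∑ a : Fin 2, ∑ b : Fin 2, p (a, b, 0, 0, 3) = 0) ∧
      (0 < ∑ w : Fin 4, p (0, 0, 0, 0, w)) := by
  rintro ⟨p, hpos, -, h1, h2, h3, h4, h5⟩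
  simp only [Fin.sum_univ_two, Fin.sum_univ_four] at h1 h2 h3 h4 h5
  have := hpos (0,0,0,1,0); have := hpos (0,0,1,0,0); have := hpos (0,0,1,1,0)
  have := hpos (0,0,0,0,0)
  have := hpos (0,1,0,0,1); have := hpos (0,0,1,0,1); have := hpos (0,1,1,0,1)
  have := hpos (0,0,0,0,1)
  have := hpos (1,0,0,0,2); have := hpos (0,0,0,1,2); have := hpos (1,0,0,1,2)
  have := hpos (0,0,0,0,2)
  have := hpos (1,0,0,0,3); have := hpos (0,1,0,0,3); have := hpos (1,1,0,0,3)
  have := hpos (0,0,0,0,3)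
  linarith
end

section
/- (Quantum form of the Local Friendliness no-go theorem for free choices.) Let χ₊ = |+⟩ and χ₋ = |−⟩ denote the X-basis vectors, and define the Born amplitudes of the four relevant measurement contexts on Φ: A(a,b,i) = Σ_{l_A,l_B} conj(ξᵢ(l_A,l_B))·Φ(a,l_A,b,l_B); B(a,d,i) = Σ_{t_B,l_A,l_B} conj(χ_d(t_B))·conj(ξᵢ(l_A,l_B))·Φ(a,l_A,t_B,l_B); C(c,b,i) = Σ_{t_A,l_A,l_B} conj(χ_c(t_A))·conj(ξᵢ(l_A,l_B))·Φ(t_A,l_A,b,l_B); D(c,d,i) = Σ_{t_A,t_B,l_A,l_B} conj(χ_c(t_A))·conj(χ_d(t_B))·conj(ξᵢ(l_A,l_B))·Φ(t_A,l_A,t_B,l_B); E(a,b,c,d) = Σ_{t_A,t_B} conj(χ_c(t_A))·conj(χ_d(t_B))·Φ(t_A,a,t_B,b). Then there is no nonnegative p : Fin 2 × Fin 2 × Fin 2 × Fin 2 × Fin 4 → ℝ with Σ p = 1 whose marginals reproduce all these Born probabilities, i.e. such that for all a,b,c,d,i: Σ_{c,d} p(a,b,c,d,i) = |A(a,b,i)|²,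 Σ_{b,c} p(a,b,c,d,i) = |B(a,d,i)|², Σ_{a,d} p(a,b,c,d,i) = |C(c,b,i)|², Σ_{a,b} p(a,b,c,d,i) = |D(c,d,i)|², and Σ_i p(a,b,c,d,i) = |E(a,b,c,d)|². -/
open ComplexConjugate Finset

noncomputable section

/-- The maximally entangled state `φ₀ = (|0⟩⊗|0⟩ + |1⟩⊗|1⟩)/√2` of one token qubit and
one lab system, recording an agent's choice. -/
def φ0 : Fin 2 × Fin 2 → ℂ := fun p => (tens ket0 ket0 p + tens ket1 ket1 p) / (Real.sqrt 2 : ℂ)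

/-- The state `Φ(t_A, l_A, t_B, l_B) = φ₀(t_A, l_A) · φ₀(t_B, l_B)` of the token qubits
`T_A, T_B` and lab systems `L_A, L_B` after Alice and Bob encode their choices. -/
def Φ : Fin 2 → Fin 2 → Fin 2 → Fin 2 → ℂ := fun tA lA tB lB => φ0 (tA, lA) * φ0 (tB, lB)

/-- The X-basis vectors: `χ 0 = |+⟩` and `χ 1 = |−⟩`. -/
def χ : Fin 2 → Fin 2 → ℂ := ![ketP, ketM]

/-- Born amplitude: both choices revealed (`a, b`), Wigner's PBR outcome `i`. -/
def ampA (a b : Fin 2) (i : Fin 4) : ℂ :=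
  ∑ lA : Fin 2, ∑ lB : Fin 2, conj (ξ i (lA, lB)) * Φ a lA b lB

/-- Born amplitude: Alice's choice `a` revealed, Debbie's X-outcome `d`, Wigner's PBR outcome `i`. -/
def ampB (a d : Fin 2) (i : Fin 4) : ℂ :=
  ∑ tB : Fin 2, ∑ lA : Fin 2, ∑ lB : Fin 2,
    conj (χ d tB) * conj (ξ i (lA, lB)) * Φ a lA tB lB

/-- Born amplitude: Charlie's X-outcome `c`, Bob's choice `b` revealed, Wigner's PBR outcome `i`. -/
def ampC (c b : Fin 2) (i : Fin 4) : ℂ :=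
  ∑ tA : Fin 2, ∑ lA : Fin 2, ∑ lB : Fin 2,
    conj (χ c tA) * conj (ξ i (lA, lB)) * Φ tA lA b lB

/-- Born amplitude: X-outcomes `c, d` for Charlie and Debbie, Wigner's PBR outcome `i`. -/
def ampD (c d : Fin 2) (i : Fin 4) : ℂ :=
  ∑ tA : Fin 2, ∑ tB : Fin 2, ∑ lA : Fin 2, ∑ lB : Fin 2,
    conj (χ c tA) * conj (χ d tB) * conj (ξ i (lA, lB)) * Φ tA lA tB lB

/-- Born amplitude: choices `a, b` revealed by Wigner, X-outcomes `c, d` for Charlie and Debbie. -/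
def ampE (a b c d : Fin 2) : ℂ :=
  ∑ tA : Fin 2, ∑ tB : Fin 2, conj (χ c tA) * conj (χ d tB) * Φ tA a tB b


lemma hs2 : (Real.sqrt 2 : ℂ) * (Real.sqrt 2 : ℂ) = 2 := by
  rw [← Complex.ofReal_mul, Real.mul_self_sqrt (by norm_num)]
  norm_num

lemma hs2ne : (Real.sqrt 2 : ℂ) ≠ 0 := by
  simp [Real.sqrt_eq_zero']

lemma hA000 : ampA 0 0 0 = 0 := by
  simp only [ampA, ξ, Φ, φ0, tens, ket0, ket1, ketP, ketM, χ, Fin.sum_univ_two,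
    Matrix.cons_val_zero, Matrix.cons_val_one, Matrix.head_cons, map_div₀, map_add, map_sub,
    map_mul, map_one, map_zero, Complex.conj_ofReal]
  field_simp
  simp

lemma hB001 : ampB 0 0 1 = 0 := by
  simp only [ampB, ξ, Φ, φ0, tens, ket0, ket1, ketP, ketM, χ, Fin.sum_univ_two,
    Matrix.cons_val_zero, Matrix.cons_val_one, Matrix.head_cons, map_div₀, map_add, map_sub,
    map_mul, map_one, map_zero, Complex.conj_ofReal]
  have h : (Real.sqrt 2 : ℂ) ≠ 0 := hs2ne
  field_simp
  all_goals ring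

lemma hC002 : ampC 0 0 2 = 0 := by
  simp only [ampC, ξ, Φ, φ0, tens, ket0, ket1, ketP, ketM, χ, Fin.sum_univ_two,
    Matrix.cons_val_zero, Matrix.cons_val_one, Matrix.head_cons, map_div₀, map_add, map_sub,
    map_mul, map_one, map_zero, Complex.conj_ofReal, Matrix.cons_val]
  have h : (Real.sqrt 2 : ℂ) ≠ 0 := hs2ne
  field_simp
  all_goals ring

lemma hD003 : ampD 0 0 3 = 0 := by
  simp only [ampD, ξ, Φ, φ0, tens, ket0, ket1, ketP, ketM, χ, Fin.sum_univ_two,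
    Matrix.cons_val_zero, Matrix.cons_val_one, Matrix.head_cons, map_div₀, map_add, map_sub,
    map_mul, map_one, map_zero, Complex.conj_ofReal, Matrix.cons_val]
  have h : (Real.sqrt 2 : ℂ) ≠ 0 := hs2ne
  field_simp
  all_goals ring

lemma hE0000 : ampE 0 0 0 0 = 1/4 := by
  simp only [ampE, χ, Φ, φ0, tens, ket0, ket1, ketP, ketM, Fin.sum_univ_two,
    Matrix.cons_val_zero, Matrix.cons_val_one, Matrix.head_cons, map_div₀, map_add, map_sub,
    map_mul, map_one, map_zero, Complex.conj_ofReal]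
  field_simp
  ring_nf
  rw [show ((Real.sqrt 2:ℂ))^4 = ((Real.sqrt 2:ℂ)*(Real.sqrt 2:ℂ))*((Real.sqrt 2:ℂ)*(Real.sqrt 2:ℂ)) by ring, hs2]
  norm_num

/-- **Quantum form of the Local Friendliness no-go theorem for free choices.**
No nonnegative normalized joint distribution `p (a, b, c, d, i)` has marginals
reproducing the Born probabilities of all measurement contexts of the protocol. -/
theorem lf_free_choice_quantum_no_go :
    ¬ ∃ p : Fin 2 × Fin 2 × Fin 2 × Fin 2 × Fin 4 → ℝ,
      (∀ x, 0 ≤ p x) ∧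
      (∑ x : Fin 2 × Fin 2 × Fin 2 × Fin 2 × Fin 4, p x = 1) ∧
      (∀ (a b : Fin 2) (i : Fin 4),
        ∑ c : Fin 2, ∑ d : Fin 2, p (a, b, c, d, i) = ‖ampA a b i‖ ^ 2) ∧
      (∀ (a d : Fin 2) (i : Fin 4),
        ∑ b : Fin 2, ∑ c : Fin 2, p (a, b, c, d, i) = ‖ampB a d i‖ ^ 2) ∧
      (∀ (c b : Fin 2) (i : Fin 4),
        ∑ a : Fin 2, ∑ d : Fin 2, p (a, b, c, d, i) = ‖ampC c b i‖ ^ 2) ∧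
      (∀ (c d : Fin 2) (i : Fin 4),
        ∑ a : Fin 2, ∑ b : Fin 2, p (a, b, c, d, i) = ‖ampD c d i‖ ^ 2) ∧
      (∀ a b c d : Fin 2,
        ∑ i : Fin 4, p (a, b, c, d, i) = ‖ampE a b c d‖ ^ 2) := by
  rintro ⟨p, hpos, -, hA, hB, hC, hD, hE⟩
  have ha := hA 0 0 0
  rw [hA000] at ha
  simp only [norm_zero, ne_eq, OfNat.ofNat_ne_zero, not_false_eq_true, zero_pow] at ha
  have hb := hB 0 0 1
  rw [hB001] at hb
  simp only [norm_zero, ne_eq, OfNat.ofNat_ne_zero, not_false_eq_true, zero_pow] at hb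
  have hc := hC 0 0 2
  rw [hC002] at hc
  simp only [norm_zero, ne_eq, OfNat.ofNat_ne_zero, not_false_eq_true, zero_pow] at hc
  have hd := hD 0 0 3
  rw [hD003] at hd
  simp only [norm_zero, ne_eq, OfNat.ofNat_ne_zero, not_false_eq_true, zero_pow] at hd
  have he := hE 0 0 0 0
  rw [hE0000] at he
  have he' : ∑ i : Fin 4, p (0, 0, 0, 0, i) = 1/16 := by
    rw [he, show ((1:ℂ)/4) = (((1:ℝ)/4 : ℝ):ℂ) by norm_num, Complex.norm_real]
    norm_num
  simp only [Fin.sum_univ_two, Fin.sum_univ_four] at ha hb hc hd he'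
  have := hpos (0,0,0,0,0)
  have := hpos (0,0,0,1,0)
  have := hpos (0,0,1,0,0)
  have := hpos (0,0,1,1,0)
  have := hpos (0,0,0,0,1)
  have := hpos (0,1,0,0,1)
  have := hpos (0,0,1,0,1)
  have := hpos (0,1,1,0,1)
  have := hpos (0,0,0,0,2)
  have := hpos (1,0,0,0,2)
  have := hpos (0,0,0,1,2)
  have := hpos (1,0,0,1,2)
  have := hpos (0,0,0,0,3)
  have := hpos (0,1,0,0,3)
  have := hpos (1,0,0,0,3)
  have := hpos (1,1,0,0,3)
  linarith


end
end

section
/- The four Born amplitudes corresponding to the zero-probability events of the protocol vanish: (i) Σ_{l_A,l_B} conj(ξ₁(l_A,l_B))·Φ(0,l_A,0,l_B) = 0; (ii) Σ_{t_B,l_A,l_B} conj(|+⟩(t_B))·conj(ξ₂(l_A,l_B))·Φ(0,l_A,t_B,l_B) = 0; (iii) Σ_{t_A,l_A,l_B} conj(|+⟩(t_A))·conj(ξ₃(l_A,l_B))·Φ(t_A,l_A,0,l_B) = 0; (iv) Σ_{t_A,t_B,l_A,l_B} conj(|+⟩(t_A))·conj(|+⟩(t_B))·conj(ξ₄(l_A,l_B))·Φ(t_A,l_A,t_B,l_B)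 = 0. -/
open ComplexConjugate Finset

noncomputable section

set_option maxHeartbeats 4000000 in
/-- The four Born amplitudes corresponding to the zero-probability events of the
protocol vanish. -/
theorem protocol_zero_amplitudes :
    (∑ lA : Fin 2, ∑ lB : Fin 2, conj (ξ 0 (lA, lB)) * Φ 0 lA 0 lB = 0) ∧
    (∑ tB : Fin 2, ∑ lA : Fin 2, ∑ lB : Fin 2,
      conj (ketP tB) * conj (ξ 1 (lA, lB)) * Φ 0 lA tB lB = 0) ∧
    (∑ tA : Fin 2, ∑ lA : Fin 2, ∑ lB : Fin 2,
      conj (ketP tA) * conj (ξ 2 (lA, lB)) * Φ tA lA 0 lB = 0) ∧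
    (∑ tA : Fin 2, ∑ tB : Fin 2, ∑ lA : Fin 2, ∑ lB : Fin 2,
      conj (ketP tA) * conj (ketP tB) * conj (ξ 3 (lA, lB)) * Φ tA lA tB lB = 0) := by
  have hs : ((Real.sqrt 2 : ℂ)) ≠ 0 := by
    simp [Complex.ofReal_ne_zero, Real.sqrt_ne_zero']
  refine ⟨?_, ?_, ?_, ?_⟩ <;>
  · simp only [Fin.sum_univ_two, ξ, Φ, φ0, tens, ketP, ketM, ket0, ket1,
      Matrix.cons_val_zero, Matrix.cons_val_one, Matrix.head_cons, Matrix.cons_val, map_div₀, map_add, map_sub,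
      map_mul, map_one, map_zero, Complex.conj_ofReal]
    field_simp
    try ring

end
end

section
/- (Entanglement swapping.) Define w : Fin 2 × Fin 2 → ℂ by w(t_A,t_B) = Σ_{l_A,l_B} conj(ξ₁(l_A,l_B))·Φ(t_A,l_A,t_B,l_B), the unnormalized post-measurement state of the token qubits when Wigner's PBR measurement yields outcome ξ₁. Then w = (1/(2√2))·(|0⟩⊗|1⟩ + |1⟩⊗|0⟩), and w is entangled: there exist no u, v : Fin 2 → ℂ with w(i,j) = u(i)·v(j) for all i, j. -/
open ComplexConjugate Finset

noncomputable section

/-- The unnormalized post-measurement state of the token qubits when Wigner's PBR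
measurement yields outcome `ξ₁`. -/
def wPost : Fin 2 × Fin 2 → ℂ :=
  fun q => ∑ lA : Fin 2, ∑ lB : Fin 2, conj (ξ 0 (lA, lB)) * Φ q.1 lA q.2 lB

/-- **Entanglement swapping.** The post-measurement token state equals
`(1/(2√2))·(|0⟩⊗|1⟩ + |1⟩⊗|0⟩)`, and it is entangled: it is not a product of
single-qubit vectors. -/
theorem entanglement_swapping :
    (∀ q : Fin 2 × Fin 2,
      wPost q = (1 / (2 * (Real.sqrt 2 : ℂ))) * (tens ket0 ket1 q + tens ket1 ket0 q)) ∧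
    ¬ ∃ u v : Fin 2 → ℂ, ∀ i j : Fin 2, wPost (i, j) = u i * v j := by
  have hs : (Real.sqrt 2 : ℂ) ≠ 0 := by
    simp [Complex.ofReal_ne_zero, Real.sqrt_eq_zero']
  have h2 : ((Real.sqrt 2 : ℂ)) ^ 2 = 2 := by
    norm_cast; rw [Real.sq_sqrt]; norm_num
  have h1 : ∀ q : Fin 2 × Fin 2,
      wPost q = (1 / (2 * (Real.sqrt 2 : ℂ))) * (tens ket0 ket1 q + tens ket1 ket0 q) := by
    intro q
    obtain ⟨i, j⟩ := q
    fin_cases i <;> fin_cases j <;>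
      simp [wPost, ξ, Φ, φ0, tens, ket0, ket1, Fin.sum_univ_two, map_div₀] <;>
      field_simp [h2] <;> ring_nf <;> simp [h2]
  refine ⟨h1, ?_⟩
  rintro ⟨u, v, hv⟩
  have h01 : wPost (0, 1) ≠ 0 := by
    rw [h1]; simp [tens, ket0, ket1]; try exact hs
  have h10 : wPost (1, 0) ≠ 0 := by
    rw [h1]; simp [tens, ket0, ket1]; try exact hs
  have h00 : wPost (0, 0) = 0 := by rw [h1]; simp [tens, ket0, ket1]
  rw [hv] at h01 h10 h00
  rcases mul_eq_zero.mp h00 with h | h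
  · exact h01 (by rw [h, zero_mul])
  · exact h10 (by rw [h, mul_zero])

end
end

section
/- (Logical contextuality of the Wigner's-friend PBR correlations, possibilistic form.) There is no global assignment (c₀, c₁, d₀, d₁, w₀, w₁) ∈ Fin 2 × Fin 2 × Fin 2 × Fin 2 × (Fin 2 × Fin 2) × Fin 4 such that: w₀ = (c₀, d₀); c₁ = +; d₁ = +; w₀ = (0, 0); and none of the four forbidden local events occurs, i.e. ¬(c₀ = 0 ∧ d₀ = 0 ∧ w₁ = ξ₁), ¬(c₀ = 0 ∧ d₁ = + ∧ w₁ = ξ₂), ¬(c₁ = + ∧ d₀ = 0 ∧ w₁ = ξ₃), and ¬(c₁ = + ∧ d₁ = + ∧ w₁ = ξ₄). -/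
/-- **Logical contextuality of the Wigner's-friend PBR correlations (possibilistic form).**
Here `c₀, c₁` are Charlie's outcomes for settings `x = 0, 1`, `d₀, d₁` Debbie's outcomes
for `y = 0, 1` (the X-basis outcome `+` is encoded as `0 : Fin 2`), `w₀ : Fin 2 × Fin 2`
is Wigner's computational-basis outcome on the two labs and `w₁ : Fin 4` his PBR outcome
(labelling `ξ₁, ξ₂, ξ₃, ξ₄`). There is no global assignment with `w₀ = (c₀, d₀)`,
`c₁ = +`, `d₁ = +`, `w₀ = (0,0)`, avoiding all four forbidden local events. -/
theorem wigner_pbr_logically_contextual :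
    ¬ ∃ (c0 c1 d0 d1 : Fin 2) (w0 : Fin 2 × Fin 2) (w1 : Fin 4),
      w0 = (c0, d0) ∧ c1 = 0 ∧ d1 = 0 ∧ w0 = (0, 0) ∧
      ¬(c0 = 0 ∧ d0 = 0 ∧ w1 = 0) ∧
      ¬(c0 = 0 ∧ d1 = 0 ∧ w1 = 1) ∧
      ¬(c1 = 0 ∧ d0 = 0 ∧ w1 = 2) ∧
      ¬(c1 = 0 ∧ d1 = 0 ∧ w1 = 3) := by
  rintro ⟨c0, c1, d0, d1, w0, w1, h1, h2, h3, h4, h5, h6, h7, h8⟩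
  rw [h1] at h4
  obtain ⟨hc, hd⟩ := Prod.mk.injEq .. ▸ h4
  fin_cases w1 <;> simp_all
end

section
/- (Logical contextuality of the Wigner's-friend PBR correlations, probabilistic form.) There is no nonnegative function p : Fin 2 × Fin 2 × Fin 2 × Fin 2 × (Fin 2 × Fin 2) × Fin 4 → ℝ on tuples (c₀, c₁, d₀, d₁, w₀, w₁) with total sum 1 satisfying all of: (i) p assigns probability 1 to the event w₀ = (c₀, d₀); (ii) the event (c₀ = 0 ∧ d₀ = 0 ∧ w₁ = ξ₁) has probability 0; (iii) the event (c₀ = 0 ∧ d₁ = + ∧ w₁ = ξ₂) has probability 0; (iv) the event (c₁ = + ∧ d₀ = 0 ∧ w₁ = ξ₃) has probability 0; (v) the event (c₁ = + ∧ d₁ = + ∧ w₁ = ξ₄) has probability 0; (vi) the event (c₁ = + ∧ d₁ = + ∧ w₀ = (0,0)) has probability strictly greater than 0. -/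
open Finset

lemma aux3 {α β γ : Type*} [Fintype α] [Fintype β] [Fintype γ]
    (f : α → β → γ → ℝ) (hf : ∀ a b c, 0 ≤ f a b c)
    (h : ∑ a, ∑ b, ∑ c, f a b c = 0) : ∀ a b c, f a b c = 0 := by
  intro a b c
  have h1 := (Finset.sum_eq_zero_iff_of_nonneg
    (fun a _ => Finset.sum_nonneg fun b _ => Finset.sum_nonneg fun c _ => hf a b c)).mp h
      a (mem_univ a)
  have h2 := (Finset.sum_eq_zero_iff_of_nonneg
    (fun b _ => Finset.sum_nonneg fun c _ => hf a b c)).mp h1 b (mem_univ b)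
  exact (Finset.sum_eq_zero_iff_of_nonneg (fun c _ => hf a b c)).mp h2 c (mem_univ c)

/-- **Logical contextuality of the Wigner's-friend PBR correlations (probabilistic form).**
Here tuples are `(c₀, c₁, d₀, d₁, w₀, w₁)`, where `c₀, c₁` are Charlie's outcomes for
settings `x = 0, 1`, `d₀, d₁` Debbie's outcomes for `y = 0, 1` (the X-basis outcome `+`
is encoded as `0 : Fin 2`), `w₀ : Fin 2 × Fin 2` is Wigner's computational-basis outcome
on the two labs and `w₁ : Fin 4` his PBR outcome (labelling `ξ₁, ξ₂, ξ₃, ξ₄`). No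
nonnegative normalized joint distribution assigns probability 1 to `w₀ = (c₀, d₀)`,
probability 0 to the four forbidden events, and strictly positive probability to the
event `c₁ = +, d₁ = +, w₀ = (0,0)`. -/
theorem wigner_pbr_probabilistically_contextual :
    ¬ ∃ p : Fin 2 × Fin 2 × Fin 2 × Fin 2 × (Fin 2 × Fin 2) × Fin 4 → ℝ,
      (∀ x, 0 ≤ p x) ∧
      (∑ x : Fin 2 × Fin 2 × Fin 2 × Fin 2 × (Fin 2 × Fin 2) × Fin 4, p x = 1) ∧
      (∑ c0 : Fin 2, ∑ c1 : Fin 2, ∑ d0 : Fin 2, ∑ d1 : Fin 2, ∑ w1 : Fin 4,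
        p (c0, c1, d0, d1, (c0, d0), w1) = 1) ∧
      (∑ c1 : Fin 2, ∑ d1 : Fin 2, ∑ w0 : Fin 2 × Fin 2, p (0, c1, 0, d1, w0, 0) = 0) ∧
      (∑ c1 : Fin 2, ∑ d0 : Fin 2, ∑ w0 : Fin 2 × Fin 2, p (0, c1, d0, 0, w0, 1) = 0) ∧
      (∑ c0 : Fin 2, ∑ d1 : Fin 2, ∑ w0 : Fin 2 × Fin 2, p (c0, 0, 0, d1, w0, 2) = 0) ∧
      (∑ c0 : Fin 2, ∑ d0 : Fin 2, ∑ w0 : Fin 2 × Fin 2, p (c0, 0, d0, 0, w0, 3) = 0) ∧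
      (0 < ∑ c0 : Fin 2, ∑ d0 : Fin 2, ∑ w1 : Fin 4, p (c0, 0, d0, 0, (0, 0), w1)) := by
  rintro ⟨p, hpos, hsum, h1, h2, h3, h4, h5, h6⟩
  have z2 := aux3 _ (fun c1 d1 w0 => hpos (0, c1, 0, d1, w0, 0)) h2
  have z3 := aux3 _ (fun c1 d0 w0 => hpos (0, c1, d0, 0, w0, 1)) h3
  have z4 := aux3 _ (fun c0 d1 w0 => hpos (c0, 0, 0, d1, w0, 2)) h4
  have z5 := aux3 _ (fun c0 d0 w0 => hpos (c0, 0, d0, 0, w0, 3)) h5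
  have hdiagsum : ∑ x : Fin 2 × Fin 2 × Fin 2 × Fin 2 × (Fin 2 × Fin 2) × Fin 4,
      (if x.2.2.2.2.1 = (x.1, x.2.2.1) then p x else 0) = 1 := by
    simp only [Fintype.sum_prod_type, Fin.sum_univ_two, Fin.sum_univ_four] at h1 ⊢
    simp only [Prod.mk.injEq]
    norm_num at h1 ⊢
    linarith [h1]
  have hoffsum : ∑ x : Fin 2 × Fin 2 × Fin 2 × Fin 2 × (Fin 2 × Fin 2) × Fin 4,
      (if x.2.2.2.2.1 = (x.1, x.2.2.1) then 0 else p x) = 0 := by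
    have e : ∀ x : Fin 2 × Fin 2 × Fin 2 × Fin 2 × (Fin 2 × Fin 2) × Fin 4,
        (if x.2.2.2.2.1 = (x.1, x.2.2.1) then (0:ℝ) else p x)
          = p x - (if x.2.2.2.2.1 = (x.1, x.2.2.1) then p x else 0) := by
      intro x; split <;> ring
    simp only [e]
    rw [Finset.sum_sub_distrib, hsum, hdiagsum]
    ring
  have zoff : ∀ x : Fin 2 × Fin 2 × Fin 2 × Fin 2 × (Fin 2 × Fin 2) × Fin 4,
      ¬(x.2.2.2.2.1 = (x.1, x.2.2.1)) → p x = 0 := by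
    intro x hx
    have hz := (Finset.sum_eq_zero_iff_of_nonneg
      (fun y _ => by by_cases h : y.2.2.2.2.1 = (y.1, y.2.2.1) <;> simp [h, hpos y])).mp
        hoffsum x (mem_univ x)
    rwa [if_neg hx] at hz
  simp only [Fin.sum_univ_two, Fin.sum_univ_four] at h6
  have o : ∀ (c0 d0 : Fin 2) (w1 : Fin 4), ¬((c0, d0) = ((0:Fin 2), (0:Fin 2))) →
      p (c0, 0, d0, 0, (0,0), w1) = 0 := by
    intro c0 d0 w1 h
    exact zoff (c0, 0, d0, 0, (0,0), w1) (fun hh => h hh.symm)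
  have o1 := fun w1 => o 0 1 w1 (by decide)
  have o2 := fun w1 => o 1 0 w1 (by decide)
  have o3 := fun w1 => o 1 1 w1 (by decide)
  have d0 := z2 0 0 (0,0)
  have d1 := z3 0 0 (0,0)
  have d2 := z4 0 0 (0,0)
  have d3 := z5 0 0 (0,0)
  linarith [o1 0, o1 1, o1 2, o1 3, o2 0, o2 1, o2 2, o2 3, o3 0, o3 1, o3 2, o3 3]
end

section
/- Let ψ : Fin 2 × Fin 2 → ℂ be the state with ψ(0,0) = ψ(0,1) = ψ(1,1) = 1/√3 and ψ(1,0) = 0, i.e. ψ = (|0⟩⊗|0⟩ + |0⟩⊗|1⟩ + |1⟩⊗|1⟩)/√3. Then the following Born amplitudes satisfy: ⟨|0⟩⊗|−⟩, ψ⟩ = 0; ⟨|−⟩⊗|1⟩, ψ⟩ = 0; ⟨|1⟩⊗|0⟩, ψ⟩ = 0; and ⟨|−⟩⊗|−⟩, ψ⟩ = 1/(2√3) ≠ 0. -/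
open ComplexConjugate Finset

noncomputable section

/-- The state `ψ = (|0⟩⊗|0⟩ + |0⟩⊗|1⟩ + |1⟩⊗|1⟩)/√3` used in the minimal Local
Friendliness argument of Appendix B. -/
def ψmin : Fin 2 × Fin 2 → ℂ :=
  fun p => (tens ket0 ket0 p + tens ket0 ket1 p + tens ket1 ket1 p) / (Real.sqrt 3 : ℂ)

/-- Born amplitudes for the minimal Local Friendliness state:
`⟨|0⟩⊗|−⟩, ψ⟩ = 0`, `⟨|−⟩⊗|1⟩, ψ⟩ = 0`, `⟨|1⟩⊗|0⟩, ψ⟩ = 0`, and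
`⟨|−⟩⊗|−⟩, ψ⟩ = 1/(2√3) ≠ 0`. -/
theorem minimal_lf_amplitudes :
    inner2 (tens ket0 ketM) ψmin = 0 ∧
    inner2 (tens ketM ket1) ψmin = 0 ∧
    inner2 (tens ket1 ket0) ψmin = 0 ∧
    inner2 (tens ketM ketM) ψmin = 1 / (2 * (Real.sqrt 3 : ℂ)) ∧
    (1 / (2 * (Real.sqrt 3 : ℂ)) : ℂ) ≠ 0 := by
  have h2 : (Real.sqrt 2 : ℂ) ≠ 0 := by
    norm_cast; positivity
  have h3 : (Real.sqrt 3 : ℂ) ≠ 0 := by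
    norm_cast; positivity
  have hs2 : (Real.sqrt 2 : ℂ) ^ 2 = 2 := by
    norm_cast; exact Real.sq_sqrt (by norm_num)
  refine ⟨?_, ?_, ?_, ?_, ?_⟩
  · simp [inner2, tens, ψmin, ket0, ket1, ketM, Fintype.sum_prod_type, Fin.sum_univ_two,
      Complex.conj_ofReal]
    ring
  · simp [inner2, tens, ψmin, ket0, ket1, ketM, Fintype.sum_prod_type, Fin.sum_univ_two,
      Complex.conj_ofReal]
    ring
  · simp [inner2, tens, ψmin, ket0, ket1, Fintype.sum_prod_type, Fin.sum_univ_two,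
      Complex.conj_ofReal]
  · simp [inner2, tens, ψmin, ket0, ket1, ketM, Fintype.sum_prod_type, Fin.sum_univ_two,
      Complex.conj_ofReal]
    field_simp
    linear_combination (-1 : ℂ) * hs2
  · simp [h3]

end
end

section
/- (Combinatorial core of the minimal Local Friendliness argument / Hardy-type no-go.) There is no nonnegative function p : Fin 2 × Fin 2 × Fin 2 × Fin 2 → ℝ on tuples (a_Z, a_X, b_Z, b_X) with total sum 1 satisfying: (i) the event (a_Z = 0 ∧ b_X = −) has probability 0; (ii) the event (a_X = − ∧ b_Z = 1) has probability 0; (iii) the event (a_Z = 1 ∧ b_Z = 0) has probability 0; and (iv) the event (a_X = − ∧ b_X = −) has probability strictly greater than 0. -/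
open Finset

/-- **Combinatorial core of the minimal Local Friendliness argument (Hardy-type no-go).**
Tuples are `(a_Z, a_X, b_Z, b_X)` where `a_Z, b_Z` are Z-basis outcomes and `a_X, b_X`
are X-basis outcomes, with `+` encoded as `0` and `−` as `1` in `Fin 2`. There is no
nonnegative normalized joint distribution for which the events `(a_Z = 0 ∧ b_X = −)`,
`(a_X = − ∧ b_Z = 1)` and `(a_Z = 1 ∧ b_Z = 0)` have probability 0 while the event
`(a_X = − ∧ b_X = −)` has strictly positive probability. -/
theorem minimal_lf_hardy_no_go :
    ¬ ∃ p : Fin 2 × Fin 2 × Fin 2 × Fin 2 → ℝ,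
      (∀ x, 0 ≤ p x) ∧
      (∑ x : Fin 2 × Fin 2 × Fin 2 × Fin 2, p x = 1) ∧
      (∑ aX : Fin 2, ∑ bZ : Fin 2, p (0, aX, bZ, 1) = 0) ∧
      (∑ aZ : Fin 2, ∑ bX : Fin 2, p (aZ, 1, 1, bX) = 0) ∧
      (∑ aX : Fin 2, ∑ bX : Fin 2, p (1, aX, 0, bX) = 0) ∧
      (0 < ∑ aZ : Fin 2, ∑ bZ : Fin 2, p (aZ, 1, bZ, 1)) := by
  rintro ⟨p, hpos, _, h1, h2, h3, h4⟩
  simp only [Fin.sum_univ_two] at h1 h2 h3 h4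
  nlinarith [hpos (0,0,0,1), hpos (0,0,1,1), hpos (0,1,0,1), hpos (0,1,1,1),
    hpos (0,1,1,0), hpos (1,1,1,0), hpos (1,1,1,1),
    hpos (1,0,0,0), hpos (1,0,0,1), hpos (1,1,0,0), hpos (1,1,0,1)]
end
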